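/- Let F be a nonempty closed convex set of density matrices on ℂ^n and let ρ be a density matrix with ρ ∉ F. Then there exists a Hermitian matrix E with 0 ≤ E ≤ I (both E and I − E positive semidefinite) such that, setting m := min_{σ∈F} Re Tr(Eσ) (the minimum is attained since F is compact), one has 0 < m < 1 and (Re Tr(Eρ) − m)² / (m(1−m)) > (Re Tr(Eσ) − m)² / (m(1−m)) for every σ ∈ F. -/

import Mathlib

open Matrix
open scoped Kronecker BigOperators ComplexOrder ENNReal EReal

noncomputable section

/-- A density matrix on `ℂ^n`: positive semidefinite with unit trace. -/
def IsDensityMatrix {n : ℕ} (ρ : Matrix (Fin n) (Fin n) ℂ) : Prop :=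
  ρ.PosSemidef ∧ ρ.trace = 1

/-- The Choi matrix `∑ i j, E_ij ⊗ Λ(E_ij)` of a linear map on matrices. -/
def choiMatrix {n m : ℕ}
    (Λ : Matrix (Fin n) (Fin n) ℂ →ₗ[ℂ] Matrix (Fin m) (Fin m) ℂ) :
    Matrix (Fin n × Fin m) (Fin n × Fin m) ℂ :=
  ∑ i : Fin n, ∑ j : Fin n,
    (Matrix.single i j (1 : ℂ)) ⊗ₖ (Λ (Matrix.single i j (1 : ℂ)))

/-- A CPTP map: trace preserving and completely positive (PSD Choi matrix). -/
def IsCPTP {n m : ℕ}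
    (Λ : Matrix (Fin n) (Fin n) ℂ →ₗ[ℂ] Matrix (Fin m) (Fin m) ℂ) : Prop :=
  (∀ A, (Λ A).trace = A.trace) ∧ (choiMatrix Λ).PosSemidef

/-- A POVM: a finite family of PSD matrices summing to the identity. -/
def IsPOVM {m : ℕ} {ι : Type} [Fintype ι] (M : ι → Matrix (Fin m) (Fin m) ℂ) : Prop :=
  (∀ i, (M i).PosSemidef) ∧ (∑ i, M i) = 1

/-- Outcome probability `P_i^τ(θ) = Re Tr(Φ_θ(τ) M_i)`. -/
def outcomeProb {n m : ℕ} {ι : Type}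
    (Φ : ℝ → (Matrix (Fin n) (Fin n) ℂ →ₗ[ℂ] Matrix (Fin m) (Fin m) ℂ))
    (M : ι → Matrix (Fin m) (Fin m) ℂ)
    (τ : Matrix (Fin n) (Fin n) ℂ) (i : ι) (θ : ℝ) : ℝ :=
  ((Φ θ τ * M i).trace).re

/-- Classical Fisher information at `θ0` of the outcome statistics, with one-sided
derivatives taken within the parameter interval `J`. -/
def classicalFisher {n m : ℕ} {ι : Type} [Fintype ι] (J : Set ℝ)
    (Φ : ℝ → (Matrix (Fin n) (Fin n) ℂ →ₗ[ℂ] Matrix (Fin m) (Fin m) ℂ))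
    (M : ι → Matrix (Fin m) (Fin m) ℂ)
    (τ : Matrix (Fin n) (Fin n) ℂ) (θ0 : ℝ) : ℝ :=
  ∑ i : ι,
    if 0 < outcomeProb Φ M τ i θ0 then
      (derivWithin (outcomeProb Φ M τ i) J θ0) ^ 2 / outcomeProb Φ M τ i θ0
    else 0

/-- A parameter estimation task: a differentiable family of CPTP maps indexed by an
interval `J ⊆ ℝ` together with a POVM. -/
def IsEstimationTask {n m : ℕ} {ι : Type} [Fintype ι] (J : Set ℝ)
    (Φ : ℝ → (Matrix (Fin n) (Fin n) ℂ →ₗ[ℂ] Matrix (Fin m) (Fin m) ℂ))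
    (M : ι → Matrix (Fin m) (Fin m) ℂ) : Prop :=
  J.OrdConnected ∧ (∀ θ ∈ J, IsCPTP (Φ θ)) ∧ IsPOVM M ∧
    ∀ τ, IsDensityMatrix τ → ∀ i, DifferentiableOn ℝ (outcomeProb Φ M τ i) J

/-!
Separate `ρ` from `F` by a real-linear functional (Hahn–Banach), represent it on Hermitian
matrices as `A ↦ Re Tr(H A)` with `H` Hermitian, and squeeze `E = ½ + δ H` so that
`¼ ≤ E ≤ ¾`. On density matrices `Re Tr(E ·)` is then an increasing affine function of the
separating functional: its minimum `m` over the compact set `F` lies in `[¼, ¾]`, and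
`0 ≤ Re Tr(E σ) - m < Re Tr(E ρ) - m` for every `σ ∈ F`.
-/

open scoped MatrixOrder

namespace Matrix

section PosSemidef

variable {n : Type*}

lemma PosSemidef.norm_apply_sq_le {A : Matrix n n ℂ} (hA : A.PosSemidef) (i j : n) :
    ‖A i j‖ ^ 2 ≤ (A i i).re * (A j j).re := by
  have hdet := (hA.submatrix ![i, j]).det_nonneg
  rw [det_fin_two, submatrix_apply, submatrix_apply, submatrix_apply, submatrix_apply] at hdet
  simp only [Fin.isValue, cons_val_zero, cons_val_one] at hdet
  rw [← hA.1.apply j i, Complex.star_def, Complex.mul_conj, Complex.normSq_eq_norm_sq] at hdet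
  have him : ∀ k, (A k k).im = 0 := fun k => Complex.conj_eq_iff_im.mp (hA.1.apply k k)
  have hre := (Complex.le_def.mp hdet).1
  simp only [Complex.zero_re, Complex.sub_re, Complex.mul_re, him, mul_zero, sub_zero] at hre
  norm_cast at hre
  linarith

lemma PosSemidef.of_smul_one_le [Fintype n] [DecidableEq n] {A : Matrix n n ℂ} {r : ℝ}
    (hr : 0 ≤ r) (h : r • 1 ≤ A) : A.PosSemidef :=
  nonneg_iff_posSemidef.mp ((PosSemidef.one.smul hr).nonneg.trans h)

lemma PosSemidef.one_sub_of_le_smul_one [Fintype n] [DecidableEq n] {A : Matrix n n ℂ} {r : ℝ}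
    (hr : r ≤ 1) (h : A ≤ r • 1) : (1 - A).PosSemidef := by
  refine .of_smul_one_le (sub_nonneg.mpr hr) ?_
  rw [le_iff] at h ⊢
  convert h using 1
  module

lemma PosSemidef.trace_mul_nonneg [Fintype n] {P σ : Matrix n n ℂ} (hP : P.PosSemidef)
    (hσ : σ.PosSemidef) : 0 ≤ trace (P * σ) := by
  classical
  obtain ⟨B, rfl⟩ := CStarAlgebra.nonneg_iff_eq_star_mul_self.mp hσ.nonneg
  rw [star_eq_conjTranspose, ← mul_assoc, trace_mul_comm]
  simpa [mul_assoc] using (hP.mul_mul_conjTranspose_same B).trace_nonneg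

lemma re_trace_mul_le_of_le [Fintype n] {A B σ : Matrix n n ℂ} (hAB : A ≤ B)
    (hσ : σ.PosSemidef) : (trace (A * σ)).re ≤ (trace (B * σ)).re := by
  have := (Complex.le_def.mp (PosSemidef.trace_mul_nonneg (le_iff.mp hAB) hσ)).1
  simpa [sub_mul, trace_sub] using this

end PosSemidef

section TracePairing

variable {n : Type*} [Fintype n]

lemma eq_zero_of_re_trace_conjTranspose_mul_self_eq_zero {A : Matrix n n ℂ}
    (h : (trace (Aᴴ * A)).re = 0) : A = 0 := by
  have hnn : 0 ≤ trace (Aᴴ * A) := (posSemidef_conjTranspose_mul_self A).trace_nonneg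
  exact trace_conjTranspose_mul_self_eq_zero_iff.mp
    (Complex.ext h (Complex.nonneg_iff.mp hnn).2.symm)

lemma exists_re_trace_mul_eq (f : Module.Dual ℝ (Matrix n n ℂ)) :
    ∃ K : Matrix n n ℂ, ∀ A, (trace (K * A)).re = f A := by
  let B : LinearMap.BilinForm ℝ (Matrix n n ℂ) :=
    (LinearMap.mul ℝ (Matrix n n ℂ)).compr₂ (Complex.reLm.comp (traceLinearMap n ℝ ℂ))
  have hB : B.Nondegenerate := by
    refine ⟨fun K hK => ?_, fun A hA => ?_⟩
    · refine conjTranspose_eq_zero.mp (eq_zero_of_re_trace_conjTranspose_mul_self_eq_zero ?_)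
      simpa [B] using hK Kᴴ
    · exact eq_zero_of_re_trace_conjTranspose_mul_self_eq_zero (by simpa [B] using hA Aᴴ)
  exact ⟨(B.toDual hB).symm f, B.apply_toDual_symm_apply f⟩

lemma re_trace_conjTranspose_mul {K A : Matrix n n ℂ} (hA : A.IsHermitian) :
    (trace (Kᴴ * A)).re = (trace (K * A)).re := by
  rw [← hA.eq, ← conjTranspose_mul, trace_conjTranspose, hA.eq, trace_mul_comm]
  rfl

lemma exists_isHermitian_re_trace_mul_eq (f : Module.Dual ℝ (Matrix n n ℂ)) :
    ∃ H : Matrix n n ℂ, H.IsHermitian ∧ ∀ A, A.IsHermitian → (trace (H * A)).re = f A := by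
  obtain ⟨K, hK⟩ := exists_re_trace_mul_eq f
  refine ⟨(2⁻¹ : ℝ) • (K + Kᴴ), by simp [IsHermitian, add_comm], fun A hA => ?_⟩
  rw [smul_mul_assoc, trace_smul, add_mul, trace_add, Complex.real_smul, Complex.re_ofReal_mul,
    Complex.add_re, re_trace_conjTranspose_mul hA, hK]
  ring

end TracePairing

section Effect

variable {n : Type*} [Fintype n] [DecidableEq n]

open scoped Matrix.Norms.L2Operator in
lemma IsHermitian.exists_neg_smul_one_le_le_smul_one {H : Matrix n n ℂ} (hH : H.IsHermitian) :
    ∃ c : ℝ, 0 < c ∧ -(c • 1) ≤ H ∧ H ≤ c • 1 := by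
  have hnorm : ‖H‖ • (1 : Matrix n n ℂ) ≤ (‖H‖ + 1) • 1 := by
    rw [add_smul, one_smul]
    exact le_add_of_nonneg_right PosSemidef.one.nonneg
  refine ⟨‖H‖ + 1, by positivity, (neg_le_neg hnorm).trans ?_, le_trans ?_ hnorm⟩
  · simpa [Algebra.algebraMap_eq_smul_one] using hH.isSelfAdjoint.neg_algebraMap_norm_le_self
  · simpa [Algebra.algebraMap_eq_smul_one] using hH.isSelfAdjoint.le_algebraMap_norm_self

lemma exists_effect_re_trace_mul_eq_half_add (f : Module.Dual ℝ (Matrix n n ℂ)) :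
    ∃ E : Matrix n n ℂ, ∃ δ > (0 : ℝ), (4⁻¹ : ℝ) • 1 ≤ E ∧ E ≤ (3 / 4 : ℝ) • 1 ∧
      ∀ σ, σ.IsHermitian → σ.trace = 1 → (trace (E * σ)).re = 2⁻¹ + δ * f σ := by
  obtain ⟨H, hH, hHf⟩ := exists_isHermitian_re_trace_mul_eq f
  obtain ⟨c, hc, hHc_ge, hHc_le⟩ := hH.exists_neg_smul_one_le_le_smul_one
  have hδ : (0 : ℝ) < (4 * c)⁻¹ := by positivity
  refine ⟨(2⁻¹ : ℝ) • 1 + (4 * c)⁻¹ • H, (4 * c)⁻¹, hδ, ?_, ?_, fun σ hσ htr => ?_⟩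
  · rw [le_iff]
    convert (le_iff.mp hHc_ge).smul hδ.le using 1
    match_scalars <;> field_simp
    norm_num
  · rw [le_iff]
    convert (le_iff.mp hHc_le).smul hδ.le using 1
    match_scalars <;> field_simp
    norm_num
  · rw [add_mul, trace_add, smul_mul_assoc, smul_mul_assoc, one_mul, trace_smul, trace_smul,
      Complex.add_re, Complex.real_smul, Complex.real_smul, Complex.re_ofReal_mul,
      Complex.re_ofReal_mul, htr, hHf σ hσ, Complex.one_re, mul_one]

end Effect

end Matrix

lemma IsDensityMatrix.norm_apply_le_one {n : ℕ} {σ : Matrix (Fin n) (Fin n) ℂ}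
    (hσ : IsDensityMatrix σ) (i j : Fin n) : ‖σ i j‖ ≤ 1 := by
  have hnn : ∀ k, 0 ≤ (σ k k).re := fun k => (Complex.le_def.mp hσ.1.diag_nonneg).1
  have hsum : ∑ k, (σ k k).re = 1 := by
    simpa [trace, Complex.re_sum] using congrArg Complex.re hσ.2
  have hle : ∀ k, (σ k k).re ≤ 1 :=
    fun k => hsum ▸ Finset.single_le_sum (fun l _ => hnn l) (Finset.mem_univ k)
  nlinarith [hσ.1.norm_apply_sq_le i j, hnn i, hnn j, hle i, hle j, norm_nonneg (σ i j)]

lemma IsDensityMatrix.re_trace_mul_mem_Icc {n : ℕ} {E σ : Matrix (Fin n) (Fin n) ℂ} {a b : ℝ}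
    (hσ : IsDensityMatrix σ) (ha : a • 1 ≤ E) (hb : E ≤ b • 1) :
    (trace (E * σ)).re ∈ Set.Icc a b := by
  have hscalar : ∀ r : ℝ, (trace ((r • 1 : Matrix (Fin n) (Fin n) ℂ) * σ)).re = r := by
    simp [hσ.2]
  exact ⟨hscalar a ▸ re_trace_mul_le_of_le ha hσ.1, hscalar b ▸ re_trace_mul_le_of_le hb hσ.1⟩

lemma isCompact_of_forall_isDensityMatrix {n : ℕ} {F : Set (Matrix (Fin n) (Fin n) ℂ)}
    (hF : IsClosed F) (hFdm : ∀ σ ∈ F, IsDensityMatrix σ) : IsCompact F :=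
  (isCompact_univ_pi fun _ => isCompact_univ_pi fun _ => isCompact_closedBall (0 : ℂ) 1)
    |>.of_isClosed_subset hF fun σ hσ i _ j _ =>
      mem_closedBall_zero_iff.mpr ((hFdm σ hσ).norm_apply_le_one i j)

instance {n : ℕ} : LocallyConvexSpace ℝ (Matrix (Fin n) (Fin n) ℂ) :=
  inferInstanceAs (LocallyConvexSpace ℝ (Fin n → Fin n → ℂ))

/-- for any resourceful state `ρ ∉ F` there is an effect `E`
(a two-outcome POVM element, `0 ≤ E ≤ I`) whose minimum expectation `m` over the free
set lies in `(0,1)` and whose induced binary Fisher information strictly separates `ρ`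
from every free state. -/
theorem effect_fisher_witness {n : ℕ}
    (F : Set (Matrix (Fin n) (Fin n) ℂ)) (hFne : F.Nonempty) (hFcl : IsClosed F)
    (hFconv : Convex ℝ F) (hFdm : ∀ σ ∈ F, IsDensityMatrix σ)
    (ρ : Matrix (Fin n) (Fin n) ℂ) (hρ : IsDensityMatrix ρ) (hρF : ρ ∉ F) :
    ∃ E : Matrix (Fin n) (Fin n) ℂ, E.PosSemidef ∧ (1 - E).PosSemidef ∧
      ∃ σ0 ∈ F,
        (∀ σ ∈ F, ((E * σ0).trace).re ≤ ((E * σ).trace).re) ∧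
        0 < ((E * σ0).trace).re ∧ ((E * σ0).trace).re < 1 ∧
        ∀ σ ∈ F,
          (((E * σ).trace).re - ((E * σ0).trace).re) ^ 2 /
              (((E * σ0).trace).re * (1 - ((E * σ0).trace).re)) <
            (((E * ρ).trace).re - ((E * σ0).trace).re) ^ 2 /
              (((E * σ0).trace).re * (1 - ((E * σ0).trace).re)) := by
  obtain ⟨f, u, hfF, hfρ⟩ := geometric_hahn_banach_closed_point hFconv hFcl hρF
  obtain ⟨E, δ, hδ, hE_ge, hE_le, hEf⟩ := exists_effect_re_trace_mul_eq_half_add f.toLinearMap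
  obtain ⟨σ0, hσ0F, hσ0min⟩ := (isCompact_of_forall_isDensityMatrix hFcl hFdm).exists_isMinOn hFne
    (by fun_prop : Continuous fun σ : Matrix (Fin n) (Fin n) ℂ => ((E * σ).trace).re).continuousOn
  obtain ⟨hm_ge, hm_le⟩ := (hFdm σ0 hσ0F).re_trace_mul_mem_Icc hE_ge hE_le
  refine ⟨E, .of_smul_one_le (by norm_num) hE_ge, .one_sub_of_le_smul_one (by norm_num) hE_le,
    σ0, hσ0F, fun σ hσ => hσ0min hσ, by linarith, by linarith, fun σ hσ => ?_⟩
  have hgap : ((E * σ).trace).re < ((E * ρ).trace).re := by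
    have hσ' := hFdm σ hσ
    rw [hEf σ hσ'.1.1 hσ'.2, hEf ρ hρ.1.1 hρ.2, ContinuousLinearMap.coe_coe]
    linarith [mul_lt_mul_of_pos_left ((hfF σ hσ).trans hfρ) hδ]
  have hvar : 0 < ((E * σ0).trace).re * (1 - ((E * σ0).trace).re) := by nlinarith
  gcongr
  exact sub_nonneg.mpr (hσ0min hσ)

end
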